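/- Let W ∈ ℂ^{N×N} be Hermitian positive definite and b ∈ ℂ^N a unit vector, and let T be an n×n Jacobi matrix (n ≤ N) with (T^m)_{11} = b*W^m b for all integers m ≥ 0 (the Lanczos tridiagonalization of (W,b)). Let T = HHᵀ be its Cholesky factorization with H lower bidiagonal with positive diagonal entries α_0,…,α_{n−1} and subdiagonal entries β_0,…,β_{n−2}. For 1 ≤ k < n, let x_k be the minimizer of ‖b − Wy‖₂ over the Krylov subspace K_k (the k-th MINRES iterate). Then the residual r_k = b − Wx_k satisfies ‖r_k‖₂ = (Σ_{j=0}^{k} ∏_{ℓ=0}^{j−1} α_ℓ²/β_ℓ²)^{−1/2}, where the empty product (j = 0) equals 1. -/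

import Mathlib

/-!
The Krylov vectors `W ^ m b` and `T ^ m e₀` have the same Gram matrix: both Gram entries equal
the moment `b* W ^ (i + j) b = (T ^ (i + j))₀₀`, because `W` is Hermitian and `T` symmetric.
Hence the MINRES residuals `p(W) b` and `p(T) e₀` (`deg p ≤ k`, `p 0 = 1`) have the same norms,
and it suffices to solve the problem for the Jacobi matrix `T = H Hᵀ`.

There, put `ρⱼ = ∏_{ℓ<j} (-αℓ / βℓ)` for `j ≤ k` and `ρⱼ = 0` beyond. The recursion makes
`ρᵀ H` vanish on the first `k` coordinates, while `Hᵀ T^(m-1) e₀` vanishes beyond them for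
`m ≤ k`; so `⟪ρ, T ^ m e₀⟫ = 0` for `1 ≤ m ≤ k` and `⟪ρ, e₀⟫ = 1`. Every residual `u` thus has
`⟪ρ, u⟫ = 1`, and Cauchy–Schwarz gives `‖u‖ ≥ ‖ρ‖⁻¹`. Equality holds at `u = ρ / ‖ρ‖²`, which is a
residual since `T` is Hessenberg with nonzero subdiagonal `αℓ βℓ`, so that the `T ^ m e₀`,
`m ≤ k`, span the first `k + 1` coordinates. Finally `‖ρ‖² = ∑_{j≤k} ∏_{ℓ<j} αℓ² / βℓ²`.
-/

open Matrix Finset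
open scoped ComplexOrder

section KrylovResiduals

variable (R : Type*) {M M' : Type*} [CommRing R] [AddCommGroup M] [Module R M]
  [AddCommGroup M'] [Module R M']

/-- With `e m = A ^ m v`, these are the vectors `p(A) v` for the polynomials `p` of degree
at most `k` with `p 0 = 1`. -/
def krylovResiduals (e : ℕ → M) (k : ℕ) : Set M :=
  {u | ∃ d : ℕ → R, d 0 = 1 ∧ ∑ m ∈ range (k + 1), d m • e m = u}

variable {R}

theorem mem_span_range_fin_iff_exists_sum {e : ℕ → M} {k : ℕ} {x : M} :
    x ∈ Submodule.span R (Set.range fun i : Fin k => e i) ↔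
      ∃ c : ℕ → R, ∑ i ∈ range k, c i • e i = x := by
  rw [Submodule.mem_span_range_iff_exists_fun]
  constructor
  · rintro ⟨c, rfl⟩
    refine ⟨fun i => if h : i < k then c ⟨i, h⟩ else 0, ?_⟩
    rw [← Fin.sum_univ_eq_sum_range (fun i => (if h : i < k then c ⟨i, h⟩ else 0) • e i)]
    simp
  · rintro ⟨c, rfl⟩
    exact ⟨fun i => c i, Fin.sum_univ_eq_sum_range (fun i => c i • e i) k⟩

theorem sum_smul_eq_sub_map_sum (L : M →ₗ[R] M) {e : ℕ → M} (he : ∀ m, L (e m) = e (m + 1))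
    (k : ℕ) {d : ℕ → R} (hd : d 0 = 1) :
    ∑ m ∈ range (k + 1), d m • e m = e 0 - L (∑ i ∈ range k, (-d (i + 1)) • e i) := by
  simp [sum_range_succ', map_sum, he, hd, add_comm]

theorem image_sub_span_eq_krylovResiduals (L : M →ₗ[R] M) {e : ℕ → M}
    (he : ∀ m, L (e m) = e (m + 1)) (k : ℕ) :
    (fun y => e 0 - L y) '' Submodule.span R (Set.range fun i : Fin k => e i) =
      krylovResiduals R e k := by
  ext u
  constructor
  · rintro ⟨y, hy, rfl⟩
    obtain ⟨c, rfl⟩ := mem_span_range_fin_iff_exists_sum.1 hy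
    refine ⟨fun m => if m = 0 then 1 else -c (m - 1), rfl, ?_⟩
    rw [sum_smul_eq_sub_map_sum L he k rfl]
    simp
  · rintro ⟨d, hd, rfl⟩
    exact ⟨_, mem_span_range_fin_iff_exists_sum.2 ⟨_, rfl⟩,
      (sum_smul_eq_sub_map_sum L he k hd).symm⟩

theorem LinearMap.image_krylovResiduals (φ : M →ₗ[R] M') (e : ℕ → M) (k : ℕ) :
    φ '' krylovResiduals R e k = krylovResiduals R (φ ∘ e) k := by
  ext u
  simp [krylovResiduals, map_sum]

end KrylovResiduals

section InnerProduct

variable {𝕜 E F : Type*} [RCLike 𝕜] [NormedAddCommGroup E] [InnerProductSpace 𝕜 E]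
  [NormedAddCommGroup F] [InnerProductSpace 𝕜 F]

theorem norm_sum_smul_eq_of_inner_eq {ι : Type*} {f : ι → E} {g : ι → F}
    (h : ∀ i j, inner 𝕜 (f i) (f j) = inner 𝕜 (g i) (g j)) (s : Finset ι) (c : ι → 𝕜) :
    ‖∑ i ∈ s, c i • f i‖ = ‖∑ i ∈ s, c i • g i‖ := by
  simp only [norm_eq_sqrt_re_inner (𝕜 := 𝕜), sum_inner, inner_sum, inner_smul_left,
    inner_smul_right, h]

theorem image_norm_krylovResiduals_eq_of_inner_eq {f : ℕ → E} {g : ℕ → F}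
    (h : ∀ i j, inner 𝕜 (f i) (f j) = inner 𝕜 (g i) (g j)) (k : ℕ) :
    norm '' krylovResiduals 𝕜 f k = norm '' krylovResiduals 𝕜 g k := by
  ext r
  simp [krylovResiduals, norm_sum_smul_eq_of_inner_eq h]

variable {e : ℕ → E} {k : ℕ} {ρ : E}

theorem inner_sum_smul_eq_apply_zero (hρ : ∀ m ≤ k, inner 𝕜 ρ (e m) = if m = 0 then 1 else 0)
    (d : ℕ → 𝕜) : inner 𝕜 ρ (∑ m ∈ range (k + 1), d m • e m) = d 0 := by
  rw [inner_sum, sum_congr rfl fun m hm => by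
    rw [inner_smul_right, hρ m (Nat.lt_succ_iff.1 (mem_range.1 hm))]]
  simp

theorem isLeast_norm_krylovResiduals
    (hρ : ∀ m ≤ k, inner 𝕜 ρ (e m) = if m = 0 then 1 else 0)
    (hspan : ρ ∈ Submodule.span 𝕜 (Set.range fun m : Fin (k + 1) => e m)) :
    IsLeast (norm '' krylovResiduals 𝕜 e k) ‖ρ‖⁻¹ := by
  have hρ0 : ρ ≠ 0 := by
    rintro rfl
    simpa using hρ 0 (Nat.zero_le k)
  have hpos : 0 < ‖ρ‖ := norm_pos_iff.2 hρ0
  constructor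
  · obtain ⟨a, ha⟩ := mem_span_range_fin_iff_exists_sum.1 hspan
    have ha0 : a 0 = (‖ρ‖ : 𝕜) ^ 2 := by
      rw [← inner_sum_smul_eq_apply_zero hρ a, ha, inner_self_eq_norm_sq_to_K]
    refine ⟨((‖ρ‖ : 𝕜) ^ 2)⁻¹ • ρ, ⟨fun m => ((‖ρ‖ : 𝕜) ^ 2)⁻¹ * a m, ?_, ?_⟩, ?_⟩
    · simp [ha0, hpos.ne']
    · simp only [mul_smul, ← smul_sum, ha]
    · rw [norm_smul, norm_inv, norm_pow, RCLike.norm_ofReal, abs_of_pos hpos]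
      field_simp
  · rintro _ ⟨u, ⟨d, hd, rfl⟩, rfl⟩
    rw [inv_le_iff_one_le_mul₀' hpos]
    calc (1 : ℝ) = ‖inner 𝕜 ρ (∑ m ∈ range (k + 1), d m • e m)‖ := by
          rw [inner_sum_smul_eq_apply_zero hρ, hd, norm_one]
      _ ≤ _ := norm_inner_le_norm _ _

end InnerProduct

def Matrix.IsUpperHessenberg {K : Type*} [Zero K] {n : ℕ} (A : Matrix (Fin n) (Fin n) K) : Prop :=
  ∀ i j : Fin n, (j : ℕ) + 1 < i → A i j = 0

namespace Matrix.IsUpperHessenberg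

variable {K : Type*} {n : ℕ} {A : Matrix (Fin (n + 1)) (Fin (n + 1)) K}

section CommRing

variable [CommRing K] (hA : A.IsUpperHessenberg)
include hA

theorem pow_apply_zero_of_lt : ∀ (m : ℕ) (i : Fin (n + 1)), m < i → (A ^ m) i 0 = 0
  | 0, i, hi => one_apply_ne (Fin.ne_of_gt hi)
  | m + 1, i, hi => by
    rw [pow_succ', mul_apply]
    refine sum_eq_zero fun j _ => ?_
    rcases lt_or_ge m j with h | h
    · rw [pow_apply_zero_of_lt m j h, mul_zero]
    · rw [hA i j (by omega), zero_mul]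

theorem pow_apply_zero_of_eq {a : ℕ → K}
    (hsub : ∀ i j : Fin (n + 1), (i : ℕ) = j + 1 → A i j = a j) :
    ∀ (m : ℕ) (i : Fin (n + 1)), (i : ℕ) = m → (A ^ m) i 0 = ∏ l ∈ range m, a l
  | 0, i, hi => by simp [show i = 0 from Fin.ext hi]
  | m + 1, i, hi => by
    have hm : m < n + 1 := by omega
    rw [pow_succ', mul_apply, sum_eq_single ⟨m, hm⟩, hsub i _ hi,
      pow_apply_zero_of_eq hsub m _ rfl, prod_range_succ, mul_comm]
    · intro j _ hj
      rcases lt_or_gt_of_ne (Fin.val_ne_of_ne hj) with h | h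
      · rw [hA i j (by simp at h; omega), zero_mul]
      · rw [hA.pow_apply_zero_of_lt m j h, mul_zero]
    · simp

end CommRing

/-- `A ^ m e₀` is supported on the first `m + 1` coordinates and ends in `∏ l < m, a l ≠ 0`,
so these vectors form a triangular system. -/
theorem mem_span_pow_apply_zero [Field K] (hA : A.IsUpperHessenberg) {a : ℕ → K}
    (hsub : ∀ i j : Fin (n + 1), (i : ℕ) = j + 1 → A i j = a j) {p : ℕ} (hp : p ≤ n + 1)
    (ha : ∀ l, l + 1 < p → a l ≠ 0) {v : Fin (n + 1) → K}
    (hv : ∀ i : Fin (n + 1), p ≤ i → v i = 0) :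
    v ∈ Submodule.span K (Set.range fun m : Fin p => fun i => (A ^ (m : ℕ)) i 0) := by
  induction p generalizing v with
  | zero =>
    obtain rfl : v = 0 := funext fun i => hv i (Nat.zero_le _)
    exact zero_mem _
  | succ p ih =>
    set col : Fin (n + 1) → K := fun i => (A ^ p) i 0
    have hdiag : col ⟨p, hp⟩ = ∏ l ∈ range p, a l := hA.pow_apply_zero_of_eq hsub p _ rfl
    have hdiag0 : col ⟨p, hp⟩ ≠ 0 := by
      rw [hdiag, prod_ne_zero_iff]
      exact fun l hl => ha l (by simp at hl; omega)
    set c := v ⟨p, hp⟩ / col ⟨p, hp⟩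
    have hrest : v - c • col ∈
        Submodule.span K (Set.range fun m : Fin p => fun i => (A ^ (m : ℕ)) i 0) := by
      refine ih (by omega) (fun l hl => ha l (by omega)) fun i hi => ?_
      rcases (Nat.lt_or_eq_of_le hi) with h | h
      · simp [hv i (by omega), col, hA.pow_apply_zero_of_lt p i h]
      · obtain rfl : i = ⟨p, hp⟩ := Fin.ext h.symm
        simp [c, hdiag0]
    have hmono : Submodule.span K (Set.range fun m : Fin p => fun i => (A ^ (m : ℕ)) i 0) ≤
        Submodule.span K (Set.range fun m : Fin (p + 1) => fun i => (A ^ (m : ℕ)) i 0) :=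
      Submodule.span_mono (Set.range_subset_iff.2 fun m => ⟨m.castSucc, rfl⟩)
    rw [← sub_add_cancel v (c • col)]
    exact add_mem (hmono hrest) (Submodule.smul_mem _ _ (Submodule.subset_span ⟨Fin.last p, rfl⟩))

end Matrix.IsUpperHessenberg

def lowerBidiagonal {K : Type*} [Zero K] {n : ℕ} (α β : ℕ → K) : Matrix (Fin n) (Fin n) K :=
  of fun i j => if (i : ℕ) = j then α i else if (i : ℕ) = j + 1 then β j else 0

section LowerBidiagonal

variable {K : Type*} [CommRing K] {n : ℕ} (α β : ℕ → K)

theorem isUpperHessenberg_lowerBidiagonal_mul_transpose :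
    (lowerBidiagonal α β * (lowerBidiagonal α β)ᵀ : Matrix (Fin n) (Fin n) K).IsUpperHessenberg := by
  intro i j hij
  rw [mul_apply]
  refine sum_eq_zero fun l _ => ?_
  simp only [lowerBidiagonal, transpose_apply, of_apply]
  split_ifs <;> first | omega | simp

theorem lowerBidiagonal_mul_transpose_apply_of_eq_succ {i j : Fin n} (hij : (i : ℕ) = j + 1) :
    (lowerBidiagonal α β * (lowerBidiagonal α β)ᵀ : Matrix (Fin n) (Fin n) K) i j = α j * β j := by
  rw [mul_apply, sum_eq_single j]
  · simp [lowerBidiagonal, hij, mul_comm]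
  · intro l _ hl
    have hl' : (l : ℕ) ≠ j := Fin.val_ne_of_ne hl
    simp only [lowerBidiagonal, transpose_apply, of_apply]
    split_ifs <;> first | omega | simp
  · simp

theorem vecMul_lowerBidiagonal_apply_eq_zero {v : Fin n → K} {p : ℕ}
    (hv : ∀ l : Fin n, p ≤ l → v l = 0) {j : Fin n} (hj : p ≤ j) :
    (v ᵥ* lowerBidiagonal α β) j = 0 := by
  rw [vecMul, dotProduct]
  refine sum_eq_zero fun l _ => ?_
  by_cases hl : p ≤ l
  · rw [hv l hl, zero_mul]
  · simp only [lowerBidiagonal, of_apply]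
    split_ifs <;> first | omega | simp

theorem vecMul_lowerBidiagonal_apply (v : Fin n → K) {j : Fin n} (hj : (j : ℕ) + 1 < n) :
    (v ᵥ* lowerBidiagonal α β) j = α j * v j + β j * v ⟨j + 1, hj⟩ := by
  rw [vecMul, dotProduct, sum_eq_add j ⟨j + 1, hj⟩ (by simp [Fin.ext_iff])]
  · simp [lowerBidiagonal, mul_comm]
  · intro l _ ⟨hl, hl'⟩
    have h1 : (l : ℕ) ≠ j := Fin.val_ne_of_ne hl
    have h2 : (l : ℕ) ≠ j + 1 := fun h => hl' (Fin.ext h)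
    simp [lowerBidiagonal, h1, h2]
  · simp
  · simp

end LowerBidiagonal

/-- Up to scaling, the minimal residual `p(T) e₀`. -/
def residualDirection {K : Type*} [Field K] (α β : ℕ → K) (k j : ℕ) : K :=
  if j ≤ k then ∏ l ∈ range j, -(α l / β l) else 0

section ResidualDirection

variable {K : Type*} [Field K] {n k : ℕ} (α β : ℕ → K)

theorem residualDirection_vecMul_lowerBidiagonal (hβ : ∀ l < k, β l ≠ 0) (hk : k < n)
    {j : Fin n} (hj : (j : ℕ) < k) :
    ((fun i : Fin n => residualDirection α β k i) ᵥ* lowerBidiagonal α β) j = 0 := by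
  rw [vecMul_lowerBidiagonal_apply α β _ (by omega)]
  simp only [residualDirection, if_pos hj.le, if_pos (Nat.succ_le_of_lt hj), prod_range_succ]
  field_simp [hβ j hj]
  ring

theorem residualDirection_dotProduct_self (hk : k < n + 1) :
    (fun i : Fin (n + 1) => residualDirection α β k i) ⬝ᵥ
        (fun i : Fin (n + 1) => residualDirection α β k i) =
      ∑ j ∈ range (k + 1), ∏ l ∈ range j, α l ^ 2 / β l ^ 2 := by
  rw [dotProduct, Fin.sum_univ_eq_sum_range (fun j => residualDirection α β k j *
    residualDirection α β k j), ← sum_subset (range_subset_range.2 hk)]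
  · refine sum_congr rfl fun j hj => ?_
    rw [residualDirection, if_pos (Nat.lt_succ_iff.1 (mem_range.1 hj)), ← prod_mul_distrib]
    exact prod_congr rfl fun l _ => by ring
  · intro j _ hj
    simp [residualDirection, show ¬ j ≤ k by simpa using hj]

variable {T : Matrix (Fin (n + 1)) (Fin (n + 1)) K}
  (hT : T = lowerBidiagonal α β * (lowerBidiagonal α β)ᵀ)
include hT

theorem residualDirection_dotProduct_pow_apply_zero (hβ : ∀ l < k, β l ≠ 0) (hk : k < n + 1)
    {m : ℕ} (hm : m ≤ k) :
    (fun i : Fin (n + 1) => residualDirection α β k i) ⬝ᵥ (fun i => (T ^ m) i 0) =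
      if m = 0 then 1 else 0 := by
  subst hT
  set B : Matrix (Fin (n + 1)) (Fin (n + 1)) K := lowerBidiagonal α β
  rcases m with _ | m
  · rw [pow_zero, dotProduct, sum_eq_single 0 (fun i _ hi => by simp [one_apply_ne hi]) (by simp)]
    simp [residualDirection]
  have hcol : (fun i => ((B * Bᵀ) ^ (m + 1)) i 0) = B *ᵥ ((fun i => ((B * Bᵀ) ^ m) i 0) ᵥ* B) := by
    funext i
    rw [← mulVec_transpose, mulVec_mulVec, pow_succ', mul_apply]
    rfl
  rw [hcol, dotProduct_mulVec, if_neg m.succ_ne_zero]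
  refine sum_eq_zero fun j _ => ?_
  rcases lt_or_ge (j : ℕ) k with hj | hj
  · rw [residualDirection_vecMul_lowerBidiagonal α β hβ hk hj, zero_mul]
  · rw [vecMul_lowerBidiagonal_apply_eq_zero α β (p := k) (fun l hl =>
      (isUpperHessenberg_lowerBidiagonal_mul_transpose α β).pow_apply_zero_of_lt m l (by omega)) hj,
      mul_zero]

theorem residualDirection_mem_span (hα : ∀ l < k, α l ≠ 0) (hβ : ∀ l < k, β l ≠ 0)
    (hk : k < n + 1) :
    (fun i : Fin (n + 1) => residualDirection α β k i) ∈
      Submodule.span K (Set.range fun m : Fin (k + 1) => fun i => (T ^ (m : ℕ)) i 0) := by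
  subst hT
  exact (isUpperHessenberg_lowerBidiagonal_mul_transpose α β).mem_span_pow_apply_zero
    (fun _ _ hij => lowerBidiagonal_mul_transpose_apply_of_eq_succ α β hij) hk
    (fun l hl => mul_ne_zero (hα l (by omega)) (hβ l (by omega)))
    (fun i hi => by simp [residualDirection]; omega)

end ResidualDirection

theorem inner_toLp_ofReal {𝕜 ι : Type*} [RCLike 𝕜] [Fintype ι] (u v : ι → ℝ) :
    inner 𝕜 (WithLp.toLp 2 fun i => (u i : 𝕜)) (WithLp.toLp 2 fun i => (v i : 𝕜)) =
      ((u ⬝ᵥ v : ℝ) : 𝕜) := by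
  simp [PiLp.inner_apply, dotProduct, mul_comm]

theorem isLeast_norm_krylovResiduals_lowerBidiagonal_mul_transpose (𝕜 : Type*) [RCLike 𝕜]
    {n k : ℕ} {α β : ℕ → ℝ} (hα : ∀ l < k, α l ≠ 0) (hβ : ∀ l < k, β l ≠ 0) (hk : k < n + 1)
    {T : Matrix (Fin (n + 1)) (Fin (n + 1)) ℝ}
    (hT : T = lowerBidiagonal α β * (lowerBidiagonal α β)ᵀ) :
    IsLeast (norm '' krylovResiduals 𝕜
        (fun m => WithLp.toLp 2 fun i : Fin (n + 1) => ((T ^ m) i 0 : 𝕜)) k)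
      (√(∑ j ∈ range (k + 1), ∏ l ∈ range j, α l ^ 2 / β l ^ 2))⁻¹ := by
  set ρ : Fin (n + 1) → ℝ := fun i => residualDirection α β k i
  have hnorm : ‖(WithLp.toLp 2 fun i => (ρ i : 𝕜))‖ =
      √(∑ j ∈ range (k + 1), ∏ l ∈ range j, α l ^ 2 / β l ^ 2) := by
    rw [norm_eq_sqrt_re_inner (𝕜 := 𝕜), inner_toLp_ofReal, RCLike.ofReal_re,
      residualDirection_dotProduct_self α β hk]
  rw [← hnorm]
  refine isLeast_norm_krylovResiduals (fun m hm => ?_) ?_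
  · rw [inner_toLp_ofReal, residualDirection_dotProduct_pow_apply_zero α β hT hβ hk hm]
    split_ifs <;> simp
  · obtain ⟨c, hc⟩ := (mem_span_range_fin_iff_exists_sum (e := fun m i => (T ^ m) i 0)).1
      (residualDirection_mem_span α β hT hα hβ hk)
    refine (mem_span_range_fin_iff_exists_sum (R := 𝕜)
      (e := fun m => WithLp.toLp 2 fun i => ((T ^ m) i 0 : 𝕜))).2 ⟨fun m => c m, ?_⟩
    ext i
    simp [ρ, ← hc, Finset.sum_apply]

theorem Matrix.IsHermitian.inner_toLp_pow_mulVec {𝕜 ι : Type*} [RCLike 𝕜] [Fintype ι]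
    [DecidableEq ι] {W : Matrix ι ι 𝕜} (hW : W.IsHermitian) (b : ι → 𝕜) (i j : ℕ) :
    inner 𝕜 (WithLp.toLp 2 (W ^ i *ᵥ b)) (WithLp.toLp 2 (W ^ j *ᵥ b)) =
      star b ⬝ᵥ (W ^ (i + j) *ᵥ b) := by
  rw [EuclideanSpace.inner_eq_star_dotProduct, dotProduct_comm, star_mulVec, (hW.pow i).eq,
    ← dotProduct_mulVec, mulVec_mulVec, pow_add]

theorem Matrix.IsSymm.dotProduct_pow_apply {R ι : Type*} [CommSemiring R] [Fintype ι]
    [DecidableEq ι] {A : Matrix ι ι R} (hA : A.IsSymm) (i j : ℕ) (a : ι) :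
    (fun l => (A ^ i) l a) ⬝ᵥ (fun l => (A ^ j) l a) = (A ^ (i + j)) a a := by
  rw [pow_add, mul_apply, dotProduct]
  exact sum_congr rfl fun l _ => by rw [(hA.pow i).apply]

theorem image_sqrt_sum_norm_sq_sub_mulVec_eq {𝕜 ι : Type*} [RCLike 𝕜] [Fintype ι]
    [DecidableEq ι] (W : Matrix ι ι 𝕜) (b : ι → 𝕜) (k : ℕ) :
    (fun y => √(∑ j, ‖(b - W *ᵥ y) j‖ ^ 2)) ''
        Submodule.span 𝕜 (Set.range fun i : Fin k => W ^ (i : ℕ) *ᵥ b) =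
      norm '' krylovResiduals 𝕜 (fun m => WithLp.toLp 2 (W ^ m *ᵥ b)) k := by
  have hkrylov := image_sub_span_eq_krylovResiduals W.mulVecLin (e := fun m => W ^ m *ᵥ b)
    (fun m => by simp [mulVec_mulVec, pow_succ']) k
  simp only [pow_zero, one_mulVec, mulVecLin_apply] at hkrylov
  set φ := (WithLp.linearEquiv 2 𝕜 (ι → 𝕜)).symm.toLinearMap
  calc _ = norm '' (φ '' ((fun y => b - W *ᵥ y) ''
        Submodule.span 𝕜 (Set.range fun i : Fin k => W ^ (i : ℕ) *ᵥ b))) := by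
        simp [Set.image_image, φ, EuclideanSpace.norm_eq]
    _ = _ := by rw [hkrylov, φ.image_krylovResiduals]; rfl

theorem stmt_13_general (N n k : ℕ) (hkn : k < n + 1)
    (W : Matrix (Fin N) (Fin N) ℂ) (hW : W.PosDef)
    (b : Fin N → ℂ)
    (α β : ℕ → ℝ) (hα : ∀ i, i < n + 1 → 0 < α i) (hβ : ∀ i, i < n → 0 < β i)
    (H : Matrix (Fin (n + 1)) (Fin (n + 1)) ℝ)
    (hH : ∀ i j : Fin (n + 1), H i j =
      if (i : ℕ) = (j : ℕ) then α i
      else if (i : ℕ) = (j : ℕ) + 1 then β j else 0)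
    (T : Matrix (Fin (n + 1)) (Fin (n + 1)) ℝ) (hT : T = H * Hᵀ)
    (hmom : ∀ m : ℕ, ((T ^ m) 0 0 : ℂ) = star b ⬝ᵥ (W ^ m).mulVec b)
    (xk : Fin N → ℂ)
    (hxk : xk ∈ Submodule.span ℂ (Set.range fun i : Fin k => (W ^ (i : ℕ)).mulVec b))
    (hmin : ∀ y ∈ Submodule.span ℂ (Set.range fun i : Fin k => (W ^ (i : ℕ)).mulVec b),
      ∑ j, ‖(b - W.mulVec xk) j‖ ^ 2 ≤ ∑ j, ‖(b - W.mulVec y) j‖ ^ 2) :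
    Real.sqrt (∑ j, ‖(b - W.mulVec xk) j‖ ^ 2) =
      1 / Real.sqrt (∑ j ∈ Finset.range (k + 1),
        ∏ ℓ ∈ Finset.range j, α ℓ ^ 2 / β ℓ ^ 2) := by
  obtain rfl : H = lowerBidiagonal α β := Matrix.ext hH
  set K := Submodule.span ℂ (Set.range fun i : Fin k => (W ^ (i : ℕ)).mulVec b)
  set residualNorm : (Fin N → ℂ) → ℝ := fun y => √(∑ j, ‖(b - W.mulVec y) j‖ ^ 2)
  have hgram : ∀ i j : ℕ,
      inner ℂ (WithLp.toLp 2 (W ^ i *ᵥ b)) (WithLp.toLp 2 (W ^ j *ᵥ b)) =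
        inner ℂ (WithLp.toLp 2 fun l : Fin (n + 1) => ((T ^ i) l 0 : ℂ))
          (WithLp.toLp 2 fun l => ((T ^ j) l 0 : ℂ)) := fun i j => by
    rw [hW.isHermitian.inner_toLp_pow_mulVec, ← hmom,
      ← (hT ▸ isSymm_mul_transpose_self _ : T.IsSymm).dotProduct_pow_apply]
    exact (inner_toLp_ofReal (𝕜 := ℂ) (fun l => (T ^ i) l 0) (fun l => (T ^ j) l 0)).symm
  have hleast : IsLeast (residualNorm '' K)
      (√(∑ j ∈ range (k + 1), ∏ l ∈ range j, α l ^ 2 / β l ^ 2))⁻¹ := by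
    rw [image_sqrt_sum_norm_sq_sub_mulVec_eq, image_norm_krylovResiduals_eq_of_inner_eq hgram]
    exact isLeast_norm_krylovResiduals_lowerBidiagonal_mul_transpose ℂ
      (fun l hl => (hα l (by omega)).ne') (fun l hl => (hβ l (by omega)).ne') hkn hT
  have hxk_least : IsLeast (residualNorm '' K) (residualNorm xk) :=
    ⟨Set.mem_image_of_mem _ hxk, Set.forall_mem_image.2 fun y hy => Real.sqrt_le_sqrt (hmin y hy)⟩
  rw [one_div]
  exact hxk_least.unique hleast

/-- In the setting of the Lanczos tridiagonalization `T = H Hᵀ` of a Hermitian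
positive definite pair `(W, b)`, the residual `r_k = b - W x_k` of the `k`-th MINRES
iterate (the minimizer of `‖b - W y‖₂` over the Krylov subspace `K_k`) satisfies
`‖r_k‖₂ = (∑_{j=0}^{k} ∏_{ℓ<j} α ℓ ^ 2 / β ℓ ^ 2)^{-1/2}`. -/
theorem stmt_13 (N n k : ℕ) (hk : 1 ≤ k) (hkn : k < n + 1) (hn : n + 1 ≤ N)
    (W : Matrix (Fin N) (Fin N) ℂ) (hW : W.PosDef)
    (b : Fin N → ℂ) (hb : ∑ j, ‖b j‖ ^ 2 = 1)
    (α β : ℕ → ℝ) (hα : ∀ i, i < n + 1 → 0 < α i) (hβ : ∀ i, i < n → 0 < β i)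
    (H : Matrix (Fin (n + 1)) (Fin (n + 1)) ℝ)
    (hH : ∀ i j : Fin (n + 1), H i j =
      if (i : ℕ) = (j : ℕ) then α i
      else if (i : ℕ) = (j : ℕ) + 1 then β j else 0)
    (T : Matrix (Fin (n + 1)) (Fin (n + 1)) ℝ) (hT : T = H * Hᵀ)
    (hmom : ∀ m : ℕ, ((T ^ m) 0 0 : ℂ) = star b ⬝ᵥ (W ^ m).mulVec b)
    (xk : Fin N → ℂ)
    (hxk : xk ∈ Submodule.span ℂ (Set.range fun i : Fin k => (W ^ (i : ℕ)).mulVec b))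
    (hmin : ∀ y ∈ Submodule.span ℂ (Set.range fun i : Fin k => (W ^ (i : ℕ)).mulVec b),
      ∑ j, ‖(b - W.mulVec xk) j‖ ^ 2 ≤ ∑ j, ‖(b - W.mulVec y) j‖ ^ 2) :
    Real.sqrt (∑ j, ‖(b - W.mulVec xk) j‖ ^ 2) =
      1 / Real.sqrt (∑ j ∈ Finset.range (k + 1),
        ∏ ℓ ∈ Finset.range j, α ℓ ^ 2 / β ℓ ^ 2) :=
  stmt_13_general N n k hkn W hW b α β hα hβ H hH T hT hmom xk hxk hmin
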